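/- (Snake Lemma, image of the connecting morphism) In the setting of the snake lemma for semimodules, assume α₂ is i-uniform. Then δ(Ker(α₃)) = Ker(f_C), where f_C : Coker(α₁) → Coker(α₂) is the map induced by f₂ on Bourne quotients; i.e., a class [l₂] ∈ L₂/α₁(L₁) satisfies f_C([l₂]) = 0 if and only if [l₂] = δ(k₃) for some k₃ ∈ Ker(α₃). -/

import Mathlib

/-!
If `f_C [l₂] = 0`, i-uniformity of `α₂` upgrades this to `f₂ l₂ = α₂ m₁` for some `m₁`; then
`m₁` is a lift of `k₃ := g₁ m₁`, which lies in `Ker α₃` because `α₃ (g₁ m₁) = g₂ (f₂ l₂) = 0`,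
and `δ k₃ = [l₂]`. Conversely, `f_C` is well defined and sends `δ k₃ = [l₂']` to `[α₂ m₁] = 0`.
-/

/-- `γ` is `k`-uniform. -/
def KUniform {S X Y : Type*} [Semiring S] [AddCommMonoid X] [Module S X]
    [AddCommMonoid Y] [Module S Y] (γ : X →ₗ[S] Y) : Prop :=
  ∀ x₁ x₂ : X, γ x₁ = γ x₂ →
    ∃ k₁ k₂ : X, γ k₁ = 0 ∧ γ k₂ = 0 ∧ x₁ + k₁ = x₂ + k₂

/-- Exactness of `A →f B →g C`: `f(A) = Ker(g)` and `g` is `k`-uniform. -/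
def IsExactSeq {S A B C : Type*} [Semiring S] [AddCommMonoid A] [Module S A]
    [AddCommMonoid B] [Module S B] [AddCommMonoid C] [Module S C]
    (f : A →ₗ[S] B) (g : B →ₗ[S] C) : Prop :=
  Set.range ⇑f = {b : B | g b = 0} ∧ KUniform g

/-- The Bourne congruence on the codomain of `γ` induced by the image of `γ`
(whose quotient is `Coker γ`). -/
def imRel {S X Y : Type*} [Semiring S] [AddCommMonoid X] [Module S X]
    [AddCommMonoid Y] [Module S Y] (γ : X →ₗ[S] Y) : Y → Y → Prop :=
  fun y₁ y₂ => ∃ x₁ x₂ : X, y₁ + γ x₁ = y₂ + γ x₂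

/-- `γ` is `i`-uniform: its image equals its subtractive closure. -/
def IUniform {S X Y : Type*} [Semiring S] [AddCommMonoid X] [Module S X]
    [AddCommMonoid Y] [Module S Y] (γ : X →ₗ[S] Y) : Prop :=
  Set.range ⇑γ = {y : Y | ∃ x₁ x₂ : X, y + γ x₁ = γ x₂}

section Cokernel

variable {S X Y : Type*} [Semiring S] [AddCommMonoid X] [Module S X]
  [AddCommMonoid Y] [Module S Y]

theorem imRel_equivalence (γ : X →ₗ[S] Y) : Equivalence (imRel γ) where
  refl _ := ⟨0, 0, rfl⟩
  symm := fun ⟨x₁, x₂, h⟩ => ⟨x₂, x₁, h.symm⟩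
  trans := fun {y₁ y₂ y₃} ⟨a, b, h⟩ ⟨c, d, h'⟩ => ⟨a + c, d + b, by
    calc y₁ + γ (a + c) = y₂ + γ b + γ c := by rw [map_add, ← add_assoc, h]
      _ = y₂ + γ c + γ b := add_right_comm _ _ _
      _ = y₃ + γ (d + b) := by rw [h', map_add, add_assoc]⟩

theorem mk_imRel_eq_iff (γ : X →ₗ[S] Y) (y₁ y₂ : Y) :
    Quot.mk (imRel γ) y₁ = Quot.mk (imRel γ) y₂ ↔ imRel γ y₁ y₂ :=
  ⟨fun h => (imRel_equivalence γ).eqvGen_iff.mp (Quot.eqvGen_exact h), Quot.sound⟩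

theorem mk_imRel_apply_eq_zero (γ : X →ₗ[S] Y) (x : X) :
    Quot.mk (imRel γ) (γ x) = Quot.mk (imRel γ) 0 :=
  Quot.sound ⟨0, x, by rw [map_zero, add_zero, zero_add]⟩

theorem IUniform.mk_imRel_eq_zero_iff {γ : X →ₗ[S] Y} (hγ : IUniform γ) (y : Y) :
    Quot.mk (imRel γ) y = Quot.mk (imRel γ) 0 ↔ y ∈ Set.range γ := by
  refine ⟨fun h => ?_, fun ⟨x, hx⟩ => hx ▸ mk_imRel_apply_eq_zero γ x⟩
  obtain ⟨x₁, x₂, hx⟩ := (mk_imRel_eq_iff γ y 0).mp h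
  rw [hγ]
  exact ⟨x₁, x₂, hx.trans (zero_add _)⟩

end Cokernel

theorem imRel.map {S X Y X' Y' : Type*} [Semiring S] [AddCommMonoid X] [Module S X]
    [AddCommMonoid Y] [Module S Y] [AddCommMonoid X'] [Module S X']
    [AddCommMonoid Y'] [Module S Y'] {α : X →ₗ[S] Y} {β : X' →ₗ[S] Y'}
    {ψ : X →ₗ[S] X'} {φ : Y →ₗ[S] Y'} (hcomm : β.comp ψ = φ.comp α) {y₁ y₂ : Y}
    (h : imRel α y₁ y₂) : imRel β (φ y₁) (φ y₂) := by
  obtain ⟨x₁, x₂, hx⟩ := h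
  refine ⟨ψ x₁, ψ x₂, ?_⟩
  rw [← LinearMap.comp_apply β, ← LinearMap.comp_apply β, hcomm, LinearMap.comp_apply,
    LinearMap.comp_apply, ← map_add, ← map_add, hx]

theorem IsExactSeq.apply_apply_eq_zero {S A B C : Type*} [Semiring S] [AddCommMonoid A]
    [Module S A] [AddCommMonoid B] [Module S B] [AddCommMonoid C] [Module S C]
    {f : A →ₗ[S] B} {g : B →ₗ[S] C} (h : IsExactSeq f g) (a : A) : g (f a) = 0 := by
  have hmem : f a ∈ Set.range f := ⟨a, rfl⟩
  rwa [h.1] at hmem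

theorem snake_image_delta_general {S L₁ M₁ N₁ L₂ M₂ N₂ : Type*} [Semiring S]
    [AddCommMonoid L₁] [Module S L₁] [AddCommMonoid M₁] [Module S M₁]
    [AddCommMonoid N₁] [Module S N₁] [AddCommMonoid L₂] [Module S L₂]
    [AddCommMonoid M₂] [Module S M₂] [AddCommMonoid N₂] [Module S N₂]
    (f₁ : L₁ →ₗ[S] M₁) (g₁ : M₁ →ₗ[S] N₁) (f₂ : L₂ →ₗ[S] M₂) (g₂ : M₂ →ₗ[S] N₂)
    (α₁ : L₁ →ₗ[S] L₂) (α₂ : M₁ →ₗ[S] M₂) (α₃ : N₁ →ₗ[S] N₂)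
    (hc₁ : α₂.comp f₁ = f₂.comp α₁) (hc₂ : α₃.comp g₁ = g₂.comp α₂)
    (hrow₂ : IsExactSeq f₂ g₂)
    (hα₂ : IUniform α₂) :
    ∀ l₂ : L₂,
      (Quot.mk (imRel α₂) (f₂ l₂) = Quot.mk (imRel α₂) 0 ↔
        ∃ (k₃ : N₁) (m₁ : M₁) (l₂' : L₂), α₃ k₃ = 0 ∧ g₁ m₁ = k₃ ∧
          f₂ l₂' = α₂ m₁ ∧ Quot.mk (imRel α₁) l₂ = Quot.mk (imRel α₁) l₂') := by
  intro l₂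
  constructor
  · intro hker
    obtain ⟨m₁, hm₁⟩ := (hα₂.mk_imRel_eq_zero_iff _).mp hker
    have hk₃ : α₃ (g₁ m₁) = 0 := by
      rw [← LinearMap.comp_apply α₃, hc₂, LinearMap.comp_apply, hm₁,
        hrow₂.apply_apply_eq_zero]
    exact ⟨g₁ m₁, m₁, l₂, hk₃, rfl, hm₁.symm, rfl⟩
  · rintro ⟨-, m₁, l₂', -, -, hl₂', hcls⟩
    calc Quot.mk (imRel α₂) (f₂ l₂) = Quot.mk (imRel α₂) (f₂ l₂') :=
          Quot.sound (imRel.map hc₁ ((mk_imRel_eq_iff α₁ l₂ l₂').mp hcls))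
      _ = Quot.mk (imRel α₂) 0 := hl₂' ▸ mk_imRel_apply_eq_zero α₂ m₁

/-- Snake Lemma, image of the connecting morphism: in the snake
lemma setting, if `α₂` is `i`-uniform then `δ(Ker α₃) = Ker f_C`, where
`f_C : Coker α₁ → Coker α₂` is induced by `f₂`: a class `[l₂] ∈ Coker α₁`
satisfies `f_C([l₂]) = 0` iff `[l₂] = δ(k₃)` for some `k₃ ∈ Ker α₃`, i.e. iff
`[l₂] = [l₂']` for some valid representative data `g₁ m₁ = k₃`, `f₂ l₂' = α₂ m₁`. -/
theorem snake_image_delta {S L₁ M₁ N₁ L₂ M₂ N₂ : Type*} [Semiring S]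
    [AddCommMonoid L₁] [Module S L₁] [AddCommMonoid M₁] [Module S M₁]
    [AddCommMonoid N₁] [Module S N₁] [AddCommMonoid L₂] [Module S L₂]
    [AddCommMonoid M₂] [Module S M₂] [AddCommMonoid N₂] [Module S N₂]
    (f₁ : L₁ →ₗ[S] M₁) (g₁ : M₁ →ₗ[S] N₁) (f₂ : L₂ →ₗ[S] M₂) (g₂ : M₂ →ₗ[S] N₂)
    (α₁ : L₁ →ₗ[S] L₂) (α₂ : M₁ →ₗ[S] M₂) (α₃ : N₁ →ₗ[S] N₂)
    (hc₁ : α₂.comp f₁ = f₂.comp α₁) (hc₂ : α₃.comp g₁ = g₂.comp α₂)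
    (hrow₁ : IsExactSeq f₁ g₁) (hg₁ : Function.Surjective ⇑g₁)
    (hrow₂ : IsExactSeq f₂ g₂) (hf₂ : Function.Injective ⇑f₂)
    (hα₂ : IUniform α₂) :
    ∀ l₂ : L₂,
      (Quot.mk (imRel α₂) (f₂ l₂) = Quot.mk (imRel α₂) 0 ↔
        ∃ (k₃ : N₁) (m₁ : M₁) (l₂' : L₂), α₃ k₃ = 0 ∧ g₁ m₁ = k₃ ∧
          f₂ l₂' = α₂ m₁ ∧ Quot.mk (imRel α₁) l₂ = Quot.mk (imRel α₁) l₂') :=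
  snake_image_delta_general f₁ g₁ f₂ g₂ α₁ α₂ α₃ hc₁ hc₂ hrow₂ hα₂
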